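/- Let n ≥ 4 and suppose H is a set of triangles T(a,b,c) ⊆ [n-1]^(2) forming an acyclic hypergraph on vertex set [n-1]^(2) with exactly two components, one being the vertex set of T(3,2,1) and the other containing all remaining vertices. Define D = { T(i, i⁺, n) : i ∈ [n-1] } where i⁺ ≡ i+1 (mod n-1) with i⁺ ∈ [n-1]. Then the hypergraph on vertex set [n]^(2) with hyperedge set H ∪ D is acyclic and has exactly two components: one being the vertex set of T(3,2,1), and the other containing all other vertices of [n]^(2). -/

import Mathlib

/-!
Every pair involving `n` lies in exactly one triangle of `D`, and `T(i, i⁺, n)` meets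
`[n-1]^(2)` only in `(i, i⁺)`. So in the incidence graph, adding `D` hangs a pendant star (the
node of `T(i, i⁺, n)` with its two new pair-vertices) on each old vertex `(i, i⁺)`. No cycle
passes through a pendant star, so acyclicity survives; and each star joins the component of
`(i, i⁺)`, which is the large one since `(i, i⁺) ∉ T(3,2,1)` once `n ≥ 4`. The components are
compared through the retraction collapsing all new nodes onto the old vertex `(1, 2)`.
-/

/-- `PairsSet n` is `[n]^(2)`, the set of ordered pairs of distinct elements of `{1,…,n}`. -/
def PairsSet (n : ℕ) : Set (ℕ × ℕ) :=
  {p | p.1 ≠ p.2 ∧ 1 ≤ p.1 ∧ p.1 ≤ n ∧ 1 ≤ p.2 ∧ p.2 ≤ n}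

/-- The triangle `T(a,b,c) = {(a,b),(b,c),(c,a)}`. -/
def Tset (a b c : ℕ) : Set (ℕ × ℕ) := {(a, b), (b, c), (c, a)}

/-- `h` is a triangle `T(a,b,c)` for some triple of distinct elements of `{1,…,n}`. -/
def IsTriangle (n : ℕ) (h : Set (ℕ × ℕ)) : Prop :=
  ∃ a b c : ℕ, a ≠ b ∧ b ≠ c ∧ a ≠ c ∧ 1 ≤ a ∧ a ≤ n ∧ 1 ≤ b ∧ b ≤ n ∧ 1 ≤ c ∧ c ≤ n ∧
    h = Tset a b c

/-- The bipartite incidence graph of a hypergraph with vertex set `V` and hyperedge set `H`: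
vertices on one side, hyperedges on the other, adjacency given by membership. -/
def incGraph (V : Set (ℕ × ℕ)) (H : Set (Set (ℕ × ℕ))) : SimpleGraph (↥V ⊕ ↥H) where
  Adj x y :=
    (∃ v h, x = Sum.inl v ∧ y = Sum.inr h ∧ (v : ℕ × ℕ) ∈ (h : Set (ℕ × ℕ))) ∨
    (∃ v h, y = Sum.inl v ∧ x = Sum.inr h ∧ (v : ℕ × ℕ) ∈ (h : Set (ℕ × ℕ)))
  symm := ⟨by
    rintro x y (⟨v, h, rfl, rfl, hm⟩ | ⟨v, h, rfl, rfl, hm⟩)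
    · exact Or.inr ⟨v, h, rfl, rfl, hm⟩
    · exact Or.inl ⟨v, h, rfl, rfl, hm⟩⟩
  loopless := ⟨by rintro x (⟨v, h, rfl, hy, -⟩ | ⟨v, h, hy, rfl, -⟩) <;> simp at hy⟩

/-- The hypergraph `(V, H)` is acyclic and has exactly two connected components, one whose
set of (pair-)vertices is exactly the three vertices of `T(3,2,1)` and one containing all
other vertices. -/
def TwoComponents321 (V : Set (ℕ × ℕ)) (H : Set (Set (ℕ × ℕ))) : Prop :=
  ∃ c₁ c₂ : (incGraph V H).ConnectedComponent, c₁ ≠ c₂ ∧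
    (∀ x, (incGraph V H).connectedComponentMk x = c₁ ∨
          (incGraph V H).connectedComponentMk x = c₂) ∧
    (∀ v : ↥V, (incGraph V H).connectedComponentMk (Sum.inl v) = c₁ ↔
      (v : ℕ × ℕ) ∈ Tset 3 2 1)

open SimpleGraph

namespace SimpleGraph

variable {α β : Type*} {G : SimpleGraph α} {G' : SimpleGraph β}

lemma Walk.IsCycle.exists_adj_ne_of_mem_support {x v : α} {c : G.Walk x x} (hc : c.IsCycle)
    (hv : v ∈ c.support) :
    ∃ u ∈ c.support, ∃ w ∈ c.support, u ≠ w ∧ G.Adj v u ∧ G.Adj v w := by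
  classical
  have hc' : (c.rotate v hv).IsCycle := hc.rotate hv
  exact ⟨_, (c.mem_support_rotate_iff v hv).mp (getVert_mem_support _ 1),
    _, (c.mem_support_rotate_iff v hv).mp (getVert_mem_support _ _),
    hc'.snd_ne_penultimate, adj_snd hc'.not_nil, (adj_penultimate hc'.not_nil).symm⟩

lemma Walk.IsCycle.notMem_support_of_forall_adj_eq {x u v : α} {c : G.Walk x x}
    (hc : c.IsCycle) (h : ∀ w ∈ c.support, G.Adj v w → w = u) : v ∉ c.support := fun hv => by
  obtain ⟨w₁, hw₁, w₂, hw₂, hne, h₁, h₂⟩ := hc.exists_adj_ne_of_mem_support hv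
  exact hne ((h w₁ hw₁ h₁).trans (h w₂ hw₂ h₂).symm)

lemma IsAcyclic.of_embedding_of_isCycle_support_subset_range (f : G ↪g G') (hG : G.IsAcyclic)
    (h : ∀ ⦃x⦄ (c : G'.Walk x x), c.IsCycle → ∀ y ∈ c.support, y ∈ Set.range f) :
    G'.IsAcyclic := by
  intro x c hc
  let e : G'.induce (Set.range f) ↪g G' := Embedding.induce _
  have hind : (c.induce _ (h c hc)).IsCycle := by
    rwa [← Walk.isCycle_map_iff_of_injective (f := e.toHom) e.injective, Walk.map_induce]
  exact f.isoInduceRange.isAcyclic_iff.mp hG _ hind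

lemma Reachable.map_of_adj_reachable {ρ : β → α}
    (hadj : ∀ ⦃y z⦄, G'.Adj y z → G.Reachable (ρ y) (ρ z)) {y z : β} (h : G'.Reachable y z) :
    G.Reachable (ρ y) (ρ z) := by
  obtain ⟨w⟩ := h
  induction w with
  | nil => rfl
  | cons ha _ ih => exact (hadj ha).trans ih

lemma ConnectedComponent.map_bijective_of_leftInverse (f : G →g G') {ρ : β → α}
    (hρ : Function.LeftInverse ρ f) (hadj : ∀ ⦃y z⦄, G'.Adj y z → G.Reachable (ρ y) (ρ z))
    (hback : ∀ y, G'.Reachable (f (ρ y)) y) : Function.Bijective (ConnectedComponent.map f) := by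
  refine ⟨fun c d hcd => ?_, fun c => ?_⟩
  · induction c using ConnectedComponent.ind
    induction d using ConnectedComponent.ind
    rw [ConnectedComponent.map_mk, ConnectedComponent.map_mk, ConnectedComponent.eq] at hcd
    have := hcd.map_of_adj_reachable hadj
    rwa [hρ, hρ, ← ConnectedComponent.eq] at this
  · induction c using ConnectedComponent.ind with
    | h y => exact ⟨G.connectedComponentMk (ρ y), ConnectedComponent.sound (hback y)⟩

end SimpleGraph

section IncidenceGraph

variable {V V' : Set (ℕ × ℕ)} {H H' : Set (Set (ℕ × ℕ))}

@[simp]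
lemma incGraph_adj_inl_inr {v : V} {h : H} :
    (incGraph V H).Adj (.inl v) (.inr h) ↔ (v : ℕ × ℕ) ∈ (h : Set (ℕ × ℕ)) := by
  refine ⟨?_, fun hm => Or.inl ⟨v, h, rfl, rfl, hm⟩⟩
  rintro (⟨_, _, ⟨⟩, ⟨⟩, hm⟩ | ⟨_, _, ⟨⟩, _⟩)
  exact hm

@[simp]
lemma incGraph_adj_inr_inl {v : V} {h : H} :
    (incGraph V H).Adj (.inr h) (.inl v) ↔ (v : ℕ × ℕ) ∈ (h : Set (ℕ × ℕ)) := by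
  rw [SimpleGraph.adj_comm, incGraph_adj_inl_inr]

@[simp]
lemma incGraph_not_adj_inl_inl {v w : V} : ¬ (incGraph V H).Adj (.inl v) (.inl w) := by
  simp [incGraph]

@[simp]
lemma incGraph_not_adj_inr_inr {h k : H} : ¬ (incGraph V H).Adj (.inr h) (.inr k) := by
  simp [incGraph]

def incGraphInclusion (hV : V ⊆ V') (hH : H ⊆ H') : incGraph V H ↪g incGraph V' H' where
  toFun := Sum.map (Set.inclusion hV) (Set.inclusion hH)
  inj' := Sum.map_injective.2 ⟨Set.inclusion_injective hV, Set.inclusion_injective hH⟩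
  map_rel_iff' := by rintro (v | h) (w | k) <;> simp

open Classical in
noncomputable def incGraphRetract (base : V ⊕ H) : V' ⊕ H' → V ⊕ H
  | .inl v => if hv : (v : ℕ × ℕ) ∈ V then .inl ⟨v, hv⟩ else base
  | .inr h => if hh : (h : Set (ℕ × ℕ)) ∈ H then .inr ⟨h, hh⟩ else base

lemma incGraphRetract_inl_of_mem (base : V ⊕ H) {v : V'} (hv : (v : ℕ × ℕ) ∈ V) :
    incGraphRetract (H' := H') base (.inl v) = .inl ⟨v, hv⟩ :=
  dif_pos hv

lemma incGraphRetract_inl_of_notMem (base : V ⊕ H) {v : V'} (hv : (v : ℕ × ℕ) ∉ V) :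
    incGraphRetract (H' := H') base (.inl v) = base :=
  dif_neg hv

lemma incGraphRetract_inr_of_mem (base : V ⊕ H) {h : H'} (hh : (h : Set (ℕ × ℕ)) ∈ H) :
    incGraphRetract (V' := V') base (.inr h) = .inr ⟨h, hh⟩ :=
  dif_pos hh

lemma incGraphRetract_inr_of_notMem (base : V ⊕ H) {h : H'} (hh : (h : Set (ℕ × ℕ)) ∉ H) :
    incGraphRetract (V' := V') base (.inr h) = base :=
  dif_neg hh

lemma incGraphRetract_leftInverse (hV : V ⊆ V') (hH : H ⊆ H') (base : V ⊕ H) :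
    Function.LeftInverse (incGraphRetract base) (incGraphInclusion hV hH) := by
  rintro (v | h)
  · exact incGraphRetract_inl_of_mem (H' := H') base v.2
  · exact incGraphRetract_inr_of_mem (V' := V') base h.2

end IncidenceGraph

section Fan

variable {m : ℕ}

lemma mem_tset {p : ℕ × ℕ} {a b c : ℕ} : p ∈ Tset a b c ↔ p = (a, b) ∨ p = (b, c) ∨ p = (c, a) :=
  Iff.rfl

lemma pairsSet_mono {m m' : ℕ} (h : m ≤ m') : PairsSet m ⊆ PairsSet m' :=
  fun _ ⟨hne, h1, h2, h3, h4⟩ => ⟨hne, h1, h2.trans h, h3, h4.trans h⟩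

lemma mem_pairsSet_of_isTriangle {h : Set (ℕ × ℕ)} (hh : IsTriangle m h) {p : ℕ × ℕ}
    (hp : p ∈ h) : p ∈ PairsSet m := by
  obtain ⟨a, b, c, hab, hbc, hac, ha1, ha2, hb1, hb2, hc1, hc2, rfl⟩ := hh
  rcases hp with rfl | rfl | rfl
  exacts [⟨hab, ha1, ha2, hb1, hb2⟩, ⟨hbc, hb1, hb2, hc1, hc2⟩, ⟨Ne.symm hac, hc1, hc2, ha1, ha2⟩]

lemma tset_notMem_of_forall_isTriangle {H : Set (Set (ℕ × ℕ))} (hH : ∀ h ∈ H, IsTriangle m h)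
    (a b : ℕ) : Tset a b (m + 1) ∉ H := fun hT => by
  have := (mem_pairsSet_of_isTriangle (hH _ hT) (Or.inr (Or.inl rfl))).2.2.2.2
  omega

lemma mod_add_one_eq_ite {i : ℕ} (hi : i ≤ m) : i % m + 1 = if i = m then 1 else i + 1 := by
  split_ifs with h
  · simp [h]
  · rw [Nat.mod_eq_of_lt (by omega)]

lemma mem_pairsSet_mk_mod_add_one (hm : 2 ≤ m) {i : ℕ} (hi1 : 1 ≤ i) (hi2 : i ≤ m) :
    (i, i % m + 1) ∈ PairsSet m := by
  simp only [PairsSet, Set.mem_ofPred_eq, mod_add_one_eq_ite hi2]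
  split_ifs <;> omega

lemma mk_mod_add_one_notMem_tset_three_two_one (hm : 3 ≤ m) {i : ℕ} (hi : i ≤ m) :
    (i, i % m + 1) ∉ Tset 3 2 1 := by
  simp only [mem_tset, Prod.mk.injEq, mod_add_one_eq_ite hi]
  split_ifs <;> omega

/-- The triangle `T(i, i⁺, m + 1)` of `D`, where `m = n - 1` and `i⁺ = i % m + 1`. -/
def fanTriangle (m i : ℕ) : Set (ℕ × ℕ) := Tset i (i % m + 1) (m + 1)

def fanTriangles (m : ℕ) : Set (Set (ℕ × ℕ)) :=
  {h | ∃ i, 1 ≤ i ∧ i ≤ m ∧ h = fanTriangle m i}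

lemma mk_mod_add_one_mem_fanTriangle (i : ℕ) : (i, i % m + 1) ∈ fanTriangle m i :=
  Or.inl rfl

lemma eq_of_mem_fanTriangle_of_mem_pairsSet {i : ℕ} {p : ℕ × ℕ} (hp : p ∈ fanTriangle m i)
    (hpm : p ∈ PairsSet m) : p = (i, i % m + 1) := by
  obtain ⟨-, -, h1, -, h2⟩ := hpm
  rcases mem_tset.mp hp with rfl | rfl | rfl
  · rfl
  · exact absurd h2 (by omega)
  · exact absurd h1 (by omega)

lemma eq_of_mem_fanTriangle_of_mem_fanTriangle {i j : ℕ} (hi1 : 1 ≤ i) (hi2 : i ≤ m)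
    (hj1 : 1 ≤ j) (hj2 : j ≤ m) {p : ℕ × ℕ} (hpi : p ∈ fanTriangle m i)
    (hpj : p ∈ fanTriangle m j) : i = j := by
  simp only [fanTriangle, mem_tset, mod_add_one_eq_ite hi2, mod_add_one_eq_ite hj2] at hpi hpj
  rcases hpi with rfl | rfl | rfl <;> simp only [Prod.mk.injEq] at hpj <;> split_ifs at hpj <;>
    omega

lemma exists_mem_fanTriangle_of_notMem_pairsSet {p : ℕ × ℕ} (hp : p ∈ PairsSet (m + 1))
    (hpm : p ∉ PairsSet m) : ∃ i, 1 ≤ i ∧ i ≤ m ∧ p ∈ fanTriangle m i := by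
  obtain ⟨a, b⟩ := p
  obtain ⟨hne, ha1, ha2, hb1, hb2⟩ := hp
  have hnew : a = m + 1 ∨ b = m + 1 := by
    by_contra! h
    exact hpm ⟨hne, ha1, by omega, hb1, by omega⟩
  rcases hnew with rfl | rfl
  · exact ⟨b, hb1, by omega, Or.inr (Or.inr rfl)⟩
  · by_cases ha : a = 1
    · refine ⟨m, by omega, le_rfl, Or.inr (Or.inl ?_)⟩
      simp [ha]
    · refine ⟨a - 1, by omega, by omega, Or.inr (Or.inl ?_)⟩
      rw [Nat.mod_eq_of_lt (by omega), Nat.sub_add_cancel ha1]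

end Fan

section FanExtension

variable {m : ℕ} {H : Set (Set (ℕ × ℕ))}

variable (m H) in
def fanInclusion : incGraph (PairsSet m) H ↪g incGraph (PairsSet (m + 1)) (H ∪ fanTriangles m) :=
  incGraphInclusion (pairsSet_mono m.le_succ) Set.subset_union_left

theorem isAcyclic_incGraph_union_fanTriangles (hm : 2 ≤ m) (hH : ∀ h ∈ H, IsTriangle m h)
    (hacyc : (incGraph (PairsSet m) H).IsAcyclic) :
    (incGraph (PairsSet (m + 1)) (H ∪ fanTriangles m)).IsAcyclic := by
  refine hacyc.of_embedding_of_isCycle_support_subset_range (fanInclusion m H) fun x c hc => ?_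
  have new_vertex (p : PairsSet (m + 1)) (hp : (p : ℕ × ℕ) ∉ PairsSet m) : .inl p ∉ c.support := by
    obtain ⟨i, hi1, hi2, hpi⟩ := exists_mem_fanTriangle_of_notMem_pairsSet p.2 hp
    refine hc.notMem_support_of_forall_adj_eq (u := .inr ⟨_, .inr ⟨i, hi1, hi2, rfl⟩⟩) ?_
    rintro (w | ⟨k, hk | ⟨j, hj1, hj2, rfl⟩⟩) - hadj
    · simp at hadj
    · exact absurd (mem_pairsSet_of_isTriangle (hH k hk) (incGraph_adj_inl_inr.mp hadj)) hp
    · obtain rfl := eq_of_mem_fanTriangle_of_mem_fanTriangle hj1 hj2 hi1 hi2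
        (incGraph_adj_inl_inr.mp hadj) hpi
      rfl
  have new_triangle (h : ↥(H ∪ fanTriangles m)) (hh : (h : Set (ℕ × ℕ)) ∉ H) :
      .inr h ∉ c.support := by
    obtain ⟨h, hh' | ⟨i, hi1, hi2, rfl⟩⟩ := h
    · exact absurd hh' hh
    refine hc.notMem_support_of_forall_adj_eq
      (u := .inl ⟨_, pairsSet_mono m.le_succ (mem_pairsSet_mk_mod_add_one hm hi1 hi2)⟩) ?_
    rintro (p | k) hp hadj
    · by_cases hpm : (p : ℕ × ℕ) ∈ PairsSet m
      · exact congrArg _ (Subtype.ext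
          (eq_of_mem_fanTriangle_of_mem_pairsSet (incGraph_adj_inr_inl.mp hadj) hpm))
      · exact absurd hp (new_vertex p hpm)
    · simp at hadj
  rintro (p | h) hy
  · by_cases hp : (p : ℕ × ℕ) ∈ PairsSet m
    · exact ⟨.inl ⟨p, hp⟩, rfl⟩
    · exact absurd hy (new_vertex p hp)
  · by_cases hh : (h : Set (ℕ × ℕ)) ∈ H
    · exact ⟨.inr ⟨h, hh⟩, rfl⟩
    · exact absurd hy (new_triangle h hh)

variable {base : ↥(PairsSet m) ⊕ ↥H}

lemma reachable_incGraphRetract_of_adj (hm : 3 ≤ m) (hH : ∀ h ∈ H, IsTriangle m h)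
    (hbase : ∀ v : PairsSet m, (v : ℕ × ℕ) ∉ Tset 3 2 1 →
      (incGraph (PairsSet m) H).Reachable (.inl v) base)
    ⦃y z : ↥(PairsSet (m + 1)) ⊕ ↥(H ∪ fanTriangles m)⦄
    (hyz : (incGraph (PairsSet (m + 1)) (H ∪ fanTriangles m)).Adj y z) :
    (incGraph (PairsSet m) H).Reachable (incGraphRetract base y) (incGraphRetract base z) := by
  suffices key : ∀ (p : ↥(PairsSet (m + 1))) (h : ↥(H ∪ fanTriangles m)),
      (p : ℕ × ℕ) ∈ (h : Set (ℕ × ℕ)) → (incGraph (PairsSet m) H).Reachable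
        (incGraphRetract base (.inl p)) (incGraphRetract base (.inr h)) by
    rcases y with p | h <;> rcases z with q | k <;> simp only [incGraph_adj_inl_inr,
      incGraph_adj_inr_inl, incGraph_not_adj_inl_inl, incGraph_not_adj_inr_inr] at hyz
    exacts [key p k hyz, (key q h hyz).symm]
  rintro p ⟨h, hh | ⟨i, hi1, hi2, rfl⟩⟩ hph
  · have hp := mem_pairsSet_of_isTriangle (hH h hh) hph
    rw [incGraphRetract_inl_of_mem _ hp, incGraphRetract_inr_of_mem _ hh]
    exact (incGraph_adj_inl_inr (v := ⟨_, hp⟩) (h := ⟨h, hh⟩) |>.mpr hph).reachable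
  · rw [incGraphRetract_inr_of_notMem _ (tset_notMem_of_forall_isTriangle hH _ _)]
    by_cases hp : (p : ℕ × ℕ) ∈ PairsSet m
    · rw [incGraphRetract_inl_of_mem _ hp]
      apply hbase
      rw [eq_of_mem_fanTriangle_of_mem_pairsSet hph hp]
      exact mk_mod_add_one_notMem_tset_three_two_one hm hi2
    · rw [incGraphRetract_inl_of_notMem _ hp]

lemma reachable_fanInclusion_incGraphRetract (hm : 3 ≤ m)
    (hbase : ∀ v : PairsSet m, (v : ℕ × ℕ) ∉ Tset 3 2 1 →
      (incGraph (PairsSet m) H).Reachable (.inl v) base)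
    (y : ↥(PairsSet (m + 1)) ⊕ ↥(H ∪ fanTriangles m)) :
    (incGraph (PairsSet (m + 1)) (H ∪ fanTriangles m)).Reachable
      (fanInclusion m H (incGraphRetract base y)) y := by
  have to_fan (i : ℕ) (hi1 : 1 ≤ i) (hi2 : i ≤ m) :
      (incGraph (PairsSet (m + 1)) (H ∪ fanTriangles m)).Reachable (fanInclusion m H base)
        (.inr ⟨_, .inr ⟨i, hi1, hi2, rfl⟩⟩) := by
    have hi := mem_pairsSet_mk_mod_add_one (by omega) hi1 hi2
    refine ((hbase ⟨_, hi⟩ (mk_mod_add_one_notMem_tset_three_two_one hm hi2)).map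
      (fanInclusion m H).toHom).symm.trans (Adj.reachable ?_)
    exact incGraph_adj_inl_inr.mpr (mk_mod_add_one_mem_fanTriangle i)
  rcases y with p | ⟨h, hh⟩
  · by_cases hp : (p : ℕ × ℕ) ∈ PairsSet m
    · rw [incGraphRetract_inl_of_mem _ hp]
      exact Reachable.refl _
    · rw [incGraphRetract_inl_of_notMem _ hp]
      obtain ⟨i, hi1, hi2, hpi⟩ := exists_mem_fanTriangle_of_notMem_pairsSet p.2 hp
      exact (to_fan i hi1 hi2).trans (incGraph_adj_inr_inl.mpr hpi).reachable
  · by_cases hH : h ∈ H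
    · rw [incGraphRetract_inr_of_mem _ hH]
      exact Reachable.refl _
    · rw [incGraphRetract_inr_of_notMem _ hH]
      obtain ⟨i, hi1, hi2, rfl⟩ := hh.resolve_left hH
      exact to_fan i hi1 hi2

theorem twoComponents321_union_fanTriangles (hm : 3 ≤ m) (hH : ∀ h ∈ H, IsTriangle m h)
    (hcomp : TwoComponents321 (PairsSet m) H) :
    TwoComponents321 (PairsSet (m + 1)) (H ∪ fanTriangles m) := by
  obtain ⟨c₁, c₂, hne, hcover, hc₁⟩ := hcomp
  let base : ↥(PairsSet m) ⊕ ↥H := .inl ⟨(1, 2), by decide, le_rfl, by omega, by omega, by omega⟩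
  have hbase_c₂ : (incGraph (PairsSet m) H).connectedComponentMk base = c₂ :=
    (hcover base).resolve_left fun h => by simpa [mem_tset] using (hc₁ _).mp h
  have hbase (v : PairsSet m) (hv : (v : ℕ × ℕ) ∉ Tset 3 2 1) :
      (incGraph (PairsSet m) H).Reachable (.inl v) base :=
    ConnectedComponent.exact (((hcover _).resolve_left (mt (hc₁ v).mp hv)).trans hbase_c₂.symm)
  have hback := reachable_fanInclusion_incGraphRetract hm hbase
  have hinj := (ConnectedComponent.map_bijective_of_leftInverse (fanInclusion m H).toHom
    (incGraphRetract_leftInverse _ _ base) (reachable_incGraphRetract_of_adj hm hH hbase)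
    hback).injective
  have hmk (y) : (incGraph (PairsSet (m + 1)) (H ∪ fanTriangles m)).connectedComponentMk y =
      ((incGraph (PairsSet m) H).connectedComponentMk (incGraphRetract base y)).map
        (fanInclusion m H).toHom :=
    (ConnectedComponent.sound (hback y)).symm
  refine ⟨c₁.map (fanInclusion m H).toHom, c₂.map (fanInclusion m H).toHom, hinj.ne hne,
    fun y => ?_, fun v => ?_⟩
  · rw [hmk]
    rcases hcover (incGraphRetract base y) with h | h <;> rw [h] <;> simp
  · rw [hmk, hinj.eq_iff]
    by_cases hv : (v : ℕ × ℕ) ∈ PairsSet m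
    · rw [incGraphRetract_inl_of_mem _ hv, hc₁]
    · rw [incGraphRetract_inl_of_notMem _ hv, hbase_c₂, iff_false_intro hne.symm, false_iff]
      obtain ⟨⟨a, b⟩, hne, ha1, ha2, hb1, hb2⟩ := v
      simp only [PairsSet, Set.mem_ofPred_eq, mem_tset, Prod.mk.injEq] at hv ⊢
      omega

end FanExtension

/-- **Inductive step.** Let `n ≥ 4` and let `H` be a set of triangles `T(a,b,c) ⊆ [n-1]^(2)`
forming an acyclic hypergraph on vertex set `[n-1]^(2)` with exactly two components, one
being the vertex set of `T(3,2,1)` and the other containing all remaining vertices.  Let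
`D = {T(i, i⁺, n) : i ∈ [n-1]}`, where `i⁺ = (i mod (n-1)) + 1` is the cyclic successor of
`i` in `[n-1]`.  Then the hypergraph on vertex set `[n]^(2)` with hyperedge set `H ∪ D` is
acyclic with exactly two components: one being the vertex set of `T(3,2,1)`, and one
containing all other vertices of `[n]^(2)`. -/
theorem inductive_step (n : ℕ) (hn : 4 ≤ n) (H : Set (Set (ℕ × ℕ)))
    (hH : ∀ h ∈ H, IsTriangle (n - 1) h)
    (hacyc : (incGraph (PairsSet (n - 1)) H).IsAcyclic)
    (hcomp : TwoComponents321 (PairsSet (n - 1)) H) :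
    (incGraph (PairsSet n)
        (H ∪ {h | ∃ i : ℕ, 1 ≤ i ∧ i ≤ n - 1 ∧ h = Tset i (i % (n - 1) + 1) n})).IsAcyclic ∧
    TwoComponents321 (PairsSet n)
        (H ∪ {h | ∃ i : ℕ, 1 ≤ i ∧ i ≤ n - 1 ∧ h = Tset i (i % (n - 1) + 1) n}) := by
  obtain ⟨m, rfl⟩ : ∃ m, n = m + 1 := ⟨n - 1, by omega⟩
  rw [Nat.add_sub_cancel] at hH hacyc hcomp ⊢
  exact ⟨isAcyclic_incGraph_union_fanTriangles (by omega) hH hacyc,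
    twoComponents321_union_fanTriangles (by omega) hH hcomp⟩
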